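/- Let $\Phi \in H^\infty_{\mathcal{B}(E_2, E)}(\mathbb{T})$ be inner and $\mathcal{G} \subseteq \mathcal{G}_\Phi$ a nonzero subset. Then $\mathcal{M} = \overline{\mathrm{span}}(\mathcal{G}) \oplus (\Phi H^2_{E_2}(\mathbb{T}) \oplus \{0\})$ is a closed subspace of $H^2_E(\mathbb{T}) \oplus E$ invariant under the Brownian shift $B^E_{\sigma, e^{i\theta}}$, and $\mathcal{M} \not\subseteq H^2_E(\mathbb{T}) \oplus \{0\}$. -/

import Mathlib

open Complex

noncomputable section
set_option linter.unusedSectionVars false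

/-- The `E`-valued Hardy space `H²_E(𝕋)`, modeled by the ℓ² space of its
Taylor/Fourier coefficient sequences. -/
abbrev Hardy (E : Type*) [NormedAddCommGroup E] [InnerProductSpace ℂ E] [CompleteSpace E] :=
  lp (fun _ : ℕ => E) 2

variable {E : Type*} [NormedAddCommGroup E] [InnerProductSpace ℂ E] [CompleteSpace E]

def shiftSeq (f : ℕ → E) : ℕ → E
  | 0 => 0
  | n + 1 => f n

lemma memℓp_shiftSeq {f : ℕ → E} (hf : Memℓp f 2) : Memℓp (shiftSeq f) 2 := by
  have h := hf.summable (by norm_num)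
  exact memℓp_gen ((summable_nat_add_iff 1).mp (by simpa [shiftSeq] using h))

/-- The shift `S_E : f ↦ z f` on `H²_E(𝕋)`. -/
def shiftOp (f : Hardy E) : Hardy E := ⟨shiftSeq f, memℓp_shiftSeq (lp.memℓp f)⟩

/-- The inclusion `i_E : E → H²_E(𝕋)` sending `x` to the constant function `x`. -/
def inclOp (y : E) : Hardy E := lp.single 2 (0 : ℕ) y

/-- The Brownian shift `B^E_{σ, e^{iθ}}` of covariance `σ` and angle `θ` on
`H²_E(𝕋) ⊕ E`: `(f, y) ↦ (zf + σ y, e^{iθ} y)`. -/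
def BS (σ θ : ℝ) (v : Hardy E × E) : Hardy E × E :=
  (shiftOp v.1 + (σ : ℂ) • inclOp v.2, Complex.exp (θ * I) • v.2)

/-!
Pairing the relation `z g + σ y = e^{iθ} g + Φ x` of `𝒢_Φ` with `z Φ f` gives
`⟪Φ f, g⟫ = e^{iθ} ⟪Φ (z f), g⟫`, hence `⟪Φ f, g⟫ = e^{iθn} ⟪Φ f, S*ⁿ g⟫ → 0`: `𝒢_Φ ⟂ Φ H²`.
So `Φ Φ*` on the first coordinate is a continuous projection onto `Φ H² ⊕ {0}` that kills
`span 𝒢`, and `ℳ` is the preimage of the closed set `span(𝒢)‾` under its complement.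
The Brownian shift maps `(g, y) ∈ 𝒢_Φ` to `e^{iθ} (g, y) + (Φ x, 0)`, and `(Φ h, 0)` to
`(Φ (z h), 0)`. Finally, if `(g, 0) ∈ 𝒢_Φ`, then `z g = e^{iθ} g + Φ x` with `Φ x ⟂ g`, so
Pythagoras forces `Φ x = 0`, and `g = 0` because the shift has no eigenvectors.
-/

open scoped InnerProductSpace

theorem Submodule.isClosed_sup_of_isProj {R M : Type*} [Ring R] [AddCommGroup M] [Module R M]
    [TopologicalSpace M] [IsTopologicalAddGroup M] {A B : Submodule R M} {P : M →L[R] M}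
    (hP : LinearMap.IsProj B P) (hA : IsClosed (A : Set M)) (hAP : A ≤ P.ker) :
    IsClosed ((A ⊔ B : Submodule R M) : Set M) := by
  have hsup : ((A ⊔ B : Submodule R M) : Set M) = (fun v => v - P v) ⁻¹' A := by
    ext v
    refine ⟨fun hv => ?_, fun hv =>
      Submodule.mem_sup.mpr ⟨_, hv, _, hP.map_mem v, sub_add_cancel v _⟩⟩
    obtain ⟨a, ha, b, hb, rfl⟩ := Submodule.mem_sup.mp hv
    have hPa : P a = 0 := hAP ha
    simpa [hPa, hP.map_id b hb] using ha
  rw [hsup]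
  exact hA.preimage (continuous_id.sub P.continuous)

lemma eq_zero_of_inner_eq_zero_of_norm_add_eq {𝕜 F : Type*} [RCLike 𝕜]
    [NormedAddCommGroup F] [InnerProductSpace 𝕜 F] {u t : F} (h : ⟪u, t⟫_𝕜 = 0)
    (hn : ‖u + t‖ = ‖u‖) : t = 0 := by
  have := norm_add_sq_eq_norm_sq_add_norm_sq_of_inner_eq_zero u t h
  rw [hn] at this
  exact norm_eq_zero.mp (mul_self_eq_zero.mp (by linarith))

@[simp] lemma shiftOp_apply_zero (f : Hardy E) : shiftOp f 0 = 0 := rfl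

@[simp] lemma shiftOp_apply_succ (f : Hardy E) (n : ℕ) : shiftOp f (n + 1) = f n := rfl

def backShift (f : Hardy E) : Hardy E :=
  ⟨fun n => f (n + 1), memℓp_gen <|
    (summable_nat_add_iff (f := fun n => ‖f n‖ ^ (2 : ENNReal).toReal) 1).mpr <|
      (lp.memℓp f).summable (by norm_num)⟩

@[simp] lemma backShift_apply (f : Hardy E) (n : ℕ) : backShift f n = f (n + 1) := rfl

lemma inner_shiftOp_left (f g : Hardy E) : ⟪shiftOp f, g⟫_ℂ = ⟪f, backShift g⟫_ℂ := by
  rw [lp.inner_eq_tsum, lp.inner_eq_tsum,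
    (lp.summable_inner (𝕜 := ℂ) (shiftOp f) g).tsum_eq_zero_add]
  simp

lemma inner_shiftOp_shiftOp (f g : Hardy E) : ⟪shiftOp f, shiftOp g⟫_ℂ = ⟪f, g⟫_ℂ :=
  inner_shiftOp_left f (shiftOp g)

lemma inner_shiftOp_inclOp (f : Hardy E) (y : E) : ⟪shiftOp f, inclOp y⟫_ℂ = 0 := by
  simp [inclOp, lp.inner_single_right]

lemma backShift_iterate_apply (n : ℕ) (g : Hardy E) (k : ℕ) :
    backShift^[n] g k = g (k + n) := by
  induction n generalizing g with
  | zero => rfl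
  | succ n ih => rw [Function.iterate_succ_apply, ih, backShift_apply, add_assoc]

lemma tendsto_norm_backShift_iterate (g : Hardy E) :
    Filter.Tendsto (fun n => ‖backShift^[n] g‖) Filter.atTop (nhds 0) := by
  have hp : 0 < (2 : ENNReal).toReal := by norm_num
  have hpow : Filter.Tendsto (fun n => ‖backShift^[n] g‖ ^ (2 : ENNReal).toReal)
      Filter.atTop (nhds 0) := by
    simp_rw [lp.norm_rpow_eq_tsum hp, backShift_iterate_apply]
    exact tendsto_sum_nat_add fun k => ‖g k‖ ^ (2 : ENNReal).toReal
  have hroot := hpow.rpow_const (p := (2 : ENNReal).toReal⁻¹) (Or.inr (by positivity))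
  rw [Real.zero_rpow (by positivity)] at hroot
  exact hroot.congr fun n => Real.rpow_rpow_inv (norm_nonneg _) hp.ne'

def shiftOpₗᵢ : Hardy E →ₗᵢ[ℂ] Hardy E where
  toFun := shiftOp
  map_add' f g := lp.ext <| funext fun n => by cases n <;> simp
  map_smul' c f := lp.ext <| funext fun n => by cases n <;> simp
  norm_map' := (LinearMap.norm_map_iff_inner_map_map _).mpr inner_shiftOp_shiftOp

lemma inclOp_zero : inclOp (0 : E) = 0 := lp.single_zero 2 0

lemma eq_zero_of_shiftOp_eq_smul {c : ℂ} (hc : c ≠ 0) {g : Hardy E} (h : shiftOp g = c • g) :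
    g = 0 := by
  have happ (n : ℕ) : c • g n = shiftOp g n := by rw [h]; rfl
  have hcoef (n : ℕ) : g n = 0 := by
    induction n with
    | zero => exact (smul_eq_zero.mp (happ 0)).resolve_left hc
    | succ n ih => exact (smul_eq_zero.mp ((happ (n + 1)).trans ih)).resolve_left hc
  exact lp.ext <| funext fun n => by simp [hcoef n]

lemma inner_eq_zero_of_inner_eq_mul_inner_shiftOp {V : Set (Hardy E)} {g : Hardy E} {c : ℂ}
    (hc : ‖c‖ ≤ 1) (hV : ∀ u ∈ V, shiftOp u ∈ V)
    (h : ∀ u ∈ V, ⟪u, g⟫_ℂ = c * ⟪shiftOp u, g⟫_ℂ)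
    {u : Hardy E} (hu : u ∈ V) : ⟪u, g⟫_ℂ = 0 := by
  have hiter (n : ℕ) : ∀ u ∈ V, ⟪u, g⟫_ℂ = c ^ n * ⟪u, backShift^[n] g⟫_ℂ := by
    induction n with
    | zero => simp
    | succ n ih =>
      intro u hu
      rw [h u hu, ih _ (hV u hu), inner_shiftOp_left, ← Function.iterate_succ_apply' backShift,
        pow_succ]
      ring
  have hbound (n : ℕ) : ‖⟪u, g⟫_ℂ‖ ≤ ‖u‖ * ‖backShift^[n] g‖ :=
    calc ‖⟪u, g⟫_ℂ‖ = ‖c‖ ^ n * ‖⟪u, backShift^[n] g⟫_ℂ‖ := by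
          rw [hiter n u hu, norm_mul, norm_pow]
      _ ≤ 1 * ‖⟪u, backShift^[n] g⟫_ℂ‖ := by gcongr; exact pow_le_one₀ (norm_nonneg c) hc
      _ ≤ ‖u‖ * ‖backShift^[n] g‖ := by rw [one_mul]; exact norm_inner_le_norm u _
  have hlim := (tendsto_norm_backShift_iterate g).const_mul ‖u‖
  rw [mul_zero] at hlim
  exact norm_le_zero_iff.mp (ge_of_tendsto' hlim hbound)

def BSL (σ θ : ℝ) : (Hardy E × E) →L[ℂ] Hardy E × E :=
  (shiftOpₗᵢ.toContinuousLinearMap ∘L .fst ℂ (Hardy E) E +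
      (σ : ℂ) • lp.singleContinuousLinearMap ℂ (fun _ : ℕ => E) 2 0 ∘L .snd ℂ (Hardy E) E
    ).prod (Complex.exp (θ * I) • .snd ℂ (Hardy E) E)

lemma coe_BSL (σ θ : ℝ) : ⇑(BSL (E := E) σ θ) = BS σ θ := rfl

section

variable {E₂ : Type*} [NormedAddCommGroup E₂] [InnerProductSpace ℂ E₂] [CompleteSpace E₂]

/-- `𝒢_Φ`, with `T` in the role of multiplication by `Φ`. -/
def GPhi (σ θ : ℝ) (T : Hardy E₂ →L[ℂ] Hardy E) : Set (Hardy E × E) :=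
  {p | ∃ x : E₂, shiftOp p.1 + (σ : ℂ) • inclOp p.2 = Complex.exp (θ * I) • p.1 + T (inclOp x)}

def typeIISubspace (G : Set (Hardy E × E)) (T : Hardy E₂ →L[ℂ] Hardy E) :
    Submodule ℂ (Hardy E × E) :=
  (Submodule.span ℂ G).topologicalClosure ⊔
    LinearMap.range (LinearMap.prod T.toLinearMap (0 : Hardy E₂ →ₗ[ℂ] E))

namespace GPhi

variable {σ θ : ℝ} {T : Hardy E₂ →L[ℂ] Hardy E} {p : Hardy E × E}

lemma inner_eq_mul_inner_shiftOp (hTiso : ∀ h : Hardy E₂, ‖T h‖ = ‖h‖)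
    (hTcomm : ∀ h : Hardy E₂, T (shiftOp h) = shiftOp (T h)) (hp : p ∈ GPhi σ θ T)
    (f : Hardy E₂) : ⟪T f, p.1⟫_ℂ = Complex.exp (θ * I) * ⟪shiftOp (T f), p.1⟫_ℂ := by
  obtain ⟨x, hx⟩ := hp
  have hinner := congrArg (fun w => ⟪shiftOp (T f), w⟫_ℂ) hx
  simp only [inner_add_right, inner_smul_right, inner_shiftOp_shiftOp, inner_shiftOp_inclOp,
    mul_zero, add_zero] at hinner
  rw [← hTcomm, (LinearMap.norm_map_iff_inner_map_map T).mp hTiso, inner_shiftOp_inclOp,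
    add_zero] at hinner
  rw [hinner, hTcomm]

lemma inner_eq_zero (hTiso : ∀ h : Hardy E₂, ‖T h‖ = ‖h‖)
    (hTcomm : ∀ h : Hardy E₂, T (shiftOp h) = shiftOp (T h)) (hp : p ∈ GPhi σ θ T)
    (f : Hardy E₂) : ⟪T f, p.1⟫_ℂ = 0 :=
  inner_eq_zero_of_inner_eq_mul_inner_shiftOp (V := Set.range T)
    (Complex.norm_exp_ofReal_mul_I θ).le
    (by rintro _ ⟨h, rfl⟩; exact ⟨shiftOp h, hTcomm h⟩)
    (by rintro _ ⟨h, rfl⟩; exact inner_eq_mul_inner_shiftOp hTiso hTcomm hp h) ⟨f, rfl⟩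

lemma adjoint_fst_eq_zero (hTiso : ∀ h : Hardy E₂, ‖T h‖ = ‖h‖)
    (hTcomm : ∀ h : Hardy E₂, T (shiftOp h) = shiftOp (T h)) (hp : p ∈ GPhi σ θ T) :
    ContinuousLinearMap.adjoint T p.1 = 0 :=
  ext_inner_left ℂ fun f => by
    rw [ContinuousLinearMap.adjoint_inner_right, inner_eq_zero hTiso hTcomm hp, inner_zero_right]

lemma eq_zero_of_snd_eq_zero (hTiso : ∀ h : Hardy E₂, ‖T h‖ = ‖h‖)
    (hTcomm : ∀ h : Hardy E₂, T (shiftOp h) = shiftOp (T h)) (hp : p ∈ GPhi σ θ T)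
    (h2 : p.2 = 0) : p = 0 := by
  have horth := inner_eq_zero hTiso hTcomm hp
  obtain ⟨x, hx⟩ := hp
  rw [h2, inclOp_zero, smul_zero, add_zero] at hx
  set c := Complex.exp (θ * I)
  have hc : ‖c‖ = 1 := Complex.norm_exp_ofReal_mul_I θ
  have hTx : T (inclOp x) = 0 := by
    refine eq_zero_of_inner_eq_zero_of_norm_add_eq (𝕜 := ℂ) (u := c • p.1) ?_ ?_
    · rw [inner_smul_left, ← inner_conj_symm, horth, map_zero, mul_zero]
    · rw [← hx, norm_smul, hc, one_mul]
      exact shiftOpₗᵢ.norm_map p.1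
  have h1 : p.1 = 0 :=
    eq_zero_of_shiftOp_eq_smul (Complex.exp_ne_zero _) (by rw [hx, hTx, add_zero])
  exact Prod.ext h1 h2

lemma BS_eq (hp : p ∈ GPhi σ θ T) :
    ∃ x : E₂, BS σ θ p = Complex.exp (θ * I) • p + (T (inclOp x), 0) := by
  obtain ⟨x, hx⟩ := hp
  exact ⟨x, Prod.ext hx (add_zero _).symm⟩

end GPhi

section typeIISubspace

variable {σ θ : ℝ} {T : Hardy E₂ →L[ℂ] Hardy E} {G : Set (Hardy E × E)}

lemma isClosed_typeIISubspace (hTiso : ∀ h : Hardy E₂, ‖T h‖ = ‖h‖)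
    (hTcomm : ∀ h : Hardy E₂, T (shiftOp h) = shiftOp (T h)) (hG : G ⊆ GPhi σ θ T) :
    IsClosed (typeIISubspace G T : Set (Hardy E × E)) := by
  let P : (Hardy E × E) →L[ℂ] Hardy E × E :=
    (T ∘L ContinuousLinearMap.adjoint T ∘L .fst ℂ (Hardy E) E).prod 0
  have hadj (h : Hardy E₂) : ContinuousLinearMap.adjoint T (T h) = h :=
    congr($(T.norm_map_iff_adjoint_comp_self.mp hTiso) h)
  refine Submodule.isClosed_sup_of_isProj (P := P)
    ⟨fun v => ⟨ContinuousLinearMap.adjoint T v.1, rfl⟩, ?_⟩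
    (Submodule.isClosed_topologicalClosure _) ?_
  · rintro _ ⟨h, rfl⟩
    exact Prod.ext (congrArg T (hadj h)) rfl
  · refine Submodule.topologicalClosure_minimal _ (Submodule.span_le.mpr fun p hp => ?_)
      P.isClosed_ker
    exact Prod.ext (by simp [P, GPhi.adjoint_fst_eq_zero hTiso hTcomm (hG hp)]) rfl

lemma BS_mem_typeIISubspace (hTiso : ∀ h : Hardy E₂, ‖T h‖ = ‖h‖)
    (hTcomm : ∀ h : Hardy E₂, T (shiftOp h) = shiftOp (T h)) (hG : G ⊆ GPhi σ θ T)
    {v : Hardy E × E} (hv : v ∈ typeIISubspace G T) : BS σ θ v ∈ typeIISubspace G T := by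
  rw [← coe_BSL]
  refine (sup_le ?_ ?_ :
    typeIISubspace G T ≤ (typeIISubspace G T).comap (BSL σ θ).toLinearMap) hv
  · refine Submodule.topologicalClosure_minimal _ (Submodule.span_le.mpr fun p hp => ?_)
      ((isClosed_typeIISubspace hTiso hTcomm hG).preimage (BSL σ θ).continuous)
    obtain ⟨x, hx⟩ := GPhi.BS_eq (hG hp)
    show BSL σ θ p ∈ typeIISubspace G T
    rw [coe_BSL, hx]
    exact add_mem
      (Submodule.smul_mem _ _ (Submodule.mem_sup_left
        (Submodule.le_topologicalClosure _ (Submodule.subset_span hp))))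
      (Submodule.mem_sup_right ⟨inclOp x, rfl⟩)
  · rintro _ ⟨h, rfl⟩
    refine Submodule.mem_sup_right ⟨shiftOp h, ?_⟩
    simp [coe_BSL, BS, hTcomm, inclOp_zero]

end typeIISubspace

end

theorem typeII_construction_general
    {E₂ : Type*} [NormedAddCommGroup E₂] [InnerProductSpace ℂ E₂] [CompleteSpace E₂]
    (σ θ : ℝ)
    (T : Hardy E₂ →L[ℂ] Hardy E)
    (hTiso : ∀ h : Hardy E₂, ‖T h‖ = ‖h‖)
    (hTcomm : ∀ h : Hardy E₂, T (shiftOp h) = shiftOp (T h))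
    (G : Set (Hardy E × E))
    (hG : G ⊆ {p : Hardy E × E | ∃ x : E₂,
      shiftOp p.1 + (σ : ℂ) • inclOp p.2 = Complex.exp (θ * I) • p.1 + T (inclOp x)})
    (hGne : ∃ v ∈ G, v ≠ 0) :
    ∀ M : Submodule ℂ (Hardy E × E),
      M = (Submodule.span ℂ G).topologicalClosure ⊔
            LinearMap.range (LinearMap.prod T.toLinearMap (0 : Hardy E₂ →ₗ[ℂ] E)) →
      IsClosed (M : Set (Hardy E × E)) ∧ (∀ v ∈ M, BS σ θ v ∈ M) ∧
        ¬ ((M : Set (Hardy E × E)) ⊆ {p : Hardy E × E | p.2 = 0}) := by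
  rintro M rfl
  refine ⟨isClosed_typeIISubspace hTiso hTcomm hG,
    fun v hv => BS_mem_typeIISubspace hTiso hTcomm hG hv, fun hsub => ?_⟩
  obtain ⟨v, hvG, hv0⟩ := hGne
  have hv2 : v.2 = 0 := hsub <| Submodule.mem_sup_left <|
    Submodule.le_topologicalClosure _ (Submodule.subset_span hvG)
  exact hv0 (GPhi.eq_zero_of_snd_eq_zero hTiso hTcomm (hG hvG) hv2)

/-- Theorem 2.5: for every nonzero subset `𝒢 ⊆ 𝒢_Φ`, the subspace
`M = span(𝒢)‾ ⊔ (Φ H²_{E₂} ⊕ {0})` is a closed subspace of `H²_E(𝕋) ⊕ E` which is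
invariant under the Brownian shift and is of Type II (not contained in `H²_E(𝕋) ⊕ {0}`). -/
theorem typeII_construction
    {E₂ : Type*} [NormedAddCommGroup E₂] [InnerProductSpace ℂ E₂] [CompleteSpace E₂]
    (σ θ : ℝ) (hσ : 0 < σ) (hθ : θ ∈ Set.Ico 0 (2 * Real.pi))
    (T : Hardy E₂ →L[ℂ] Hardy E)
    (hTiso : ∀ h : Hardy E₂, ‖T h‖ = ‖h‖)
    (hTcomm : ∀ h : Hardy E₂, T (shiftOp h) = shiftOp (T h))
    (G : Set (Hardy E × E))
    (hG : G ⊆ {p : Hardy E × E | ∃ x : E₂,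
      shiftOp p.1 + (σ : ℂ) • inclOp p.2 = Complex.exp (θ * I) • p.1 + T (inclOp x)})
    (hGne : ∃ v ∈ G, v ≠ 0) :
    ∀ M : Submodule ℂ (Hardy E × E),
      M = (Submodule.span ℂ G).topologicalClosure ⊔
            LinearMap.range (LinearMap.prod T.toLinearMap (0 : Hardy E₂ →ₗ[ℂ] E)) →
      IsClosed (M : Set (Hardy E × E)) ∧ (∀ v ∈ M, BS σ θ v ∈ M) ∧
        ¬ ((M : Set (Hardy E × E)) ⊆ {p : Hardy E × E | p.2 = 0}) :=
  typeII_construction_general σ θ T hTiso hTcomm G hG hGne
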